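/- arXiv:1508.07515 — 3 statements merged into one kernel-verified Lean document; each statement's English description precedes it below -/
import Mathlib

section
/- ∑_{E ⊆ [n]} q^{maj(E)} = ∑_{h=0}^{n} q^{n-h} [n choose h]_q, where for E ⊆ [n], maj(E) = ∑ of those i ∈ E with i+1 ∉ E, and [n choose h]_q is the Gaussian binomial coefficient. -/
open Finset Polynomial
open scoped Classical

/-- For `E ⊆ [n]`, `Des(E) = {i ∈ E : i+1 ∉ E}`. -/
def DesE (E : Finset ℕ) : Finset ℕ := E.filter (fun i => i + 1 ∉ E)

/-- `des(E) = |Des(E)|`. -/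
def desE (E : Finset ℕ) : ℕ := (DesE E).card

/-- `maj(E) = ∑_{i ∈ Des(E)} i`. -/
def majE (E : Finset ℕ) : ℕ := ∑ i ∈ DesE E, i

/-- The Gaussian (q-)binomial coefficient `[n choose k]_q` as a polynomial in `q`. -/
noncomputable def qbinom : ℕ → ℕ → Polynomial ℤ
  | _, 0 => 1
  | 0, _ + 1 => 0
  | n + 1, k + 1 => qbinom n k + Polynomial.X ^ (k + 1) * qbinom n (k + 1)

/-!
Sort the subsets of `[n]` by size: the `k`-subsets contribute `q^k [n choose k]_q`, and reflecting
`k ↦ n - k` with the symmetry of the Gaussian binomial gives the stated sum. For the size-`k`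
formula, split `E ⊆ [n+1]` according to whether `n + 1 ∈ E`. Adjoining `n + 1` to `E ⊆ [n]` raises
`maj` by `n + 1` if `n ∉ E` and by `1` if `n ∈ E`, so the sums over `k`-subsets, together with the
same sums with `n + 1` adjoined (which equal `q^(n+1) [n choose k]_q`), satisfy a pair of
recurrences that the two q-Pascal rules solve.
-/

theorem qbinom_zero_right (n : ℕ) : qbinom n 0 = 1 := by
  cases n <;> rfl

theorem qbinom_zero_succ (k : ℕ) : qbinom 0 (k + 1) = 0 := rfl

theorem qbinom_succ_succ (n k : ℕ) :
    qbinom (n + 1) (k + 1) = qbinom n k + X ^ (k + 1) * qbinom n (k + 1) := rfl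

theorem qbinom_of_lt {n k : ℕ} (h : n < k) : qbinom n k = 0 := by
  induction n generalizing k with
  | zero => obtain ⟨k, rfl⟩ := Nat.exists_eq_succ_of_ne_zero h.ne'; rfl
  | succ n ih =>
    obtain ⟨k, rfl⟩ := Nat.exists_eq_succ_of_ne_zero (Nat.ne_zero_of_lt h)
    rw [qbinom_succ_succ, ih (by omega), ih (by omega), mul_zero, add_zero]

theorem qbinom_self (n : ℕ) : qbinom n n = 1 := by
  induction n with
  | zero => rfl
  | succ n ih => rw [qbinom_succ_succ, ih, qbinom_of_lt n.lt_succ_self, mul_zero, add_zero]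

/-- The second q-Pascal rule `[n+1, k+1] = q^(n-k) [n, k] + [n, k+1]`, multiplied by `q^(k+1)`
so that it holds for all `k`. -/
theorem X_pow_mul_qbinom_succ_succ (n k : ℕ) :
    X ^ (k + 1) * qbinom (n + 1) (k + 1) =
      X ^ (n + 1) * qbinom n k + X ^ (k + 1) * qbinom n (k + 1) := by
  induction n generalizing k with
  | zero => cases k <;> simp [qbinom_succ_succ, qbinom_zero_right, qbinom_zero_succ]
  | succ n ih =>
    rw [qbinom_succ_succ (n + 1) k]
    cases k with
    | zero =>
      rw [qbinom_zero_right]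
      linear_combination
        X * ih 0 - X * qbinom_succ_succ n 0 + (X ^ (n + 2) - X) * qbinom_zero_right n
    | succ k =>
      linear_combination X * ih k + X ^ (k + 2) * ih (k + 1) - X ^ (n + 2) * qbinom_succ_succ n k -
        X ^ (k + 2) * qbinom_succ_succ n (k + 1)

theorem qbinom_add_succ_succ (j k : ℕ) :
    qbinom (j + k + 1) (k + 1) = X ^ j * qbinom (j + k) k + qbinom (j + k) (k + 1) := by
  refine mul_left_cancel₀ (pow_ne_zero (k + 1) (X_ne_zero (R := ℤ))) ?_
  rw [X_pow_mul_qbinom_succ_succ]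
  ring

theorem qbinom_symm_add (j k : ℕ) : qbinom (j + k) j = qbinom (j + k) k := by
  induction j generalizing k with
  | zero => rw [zero_add, qbinom_zero_right, qbinom_self]
  | succ j ihj =>
    induction k with
    | zero => rw [add_zero, qbinom_self, qbinom_zero_right]
    | succ k ihk =>
      have h1 : qbinom (j + k + 1) j = qbinom (j + k + 1) (k + 1) := ihj (k + 1)
      have h2 : qbinom (j + k + 1) (j + 1) = qbinom (j + k + 1) k := by
        rwa [add_right_comm]
      have h3 := qbinom_add_succ_succ (j + 1) k
      rw [add_right_comm j 1 k] at h3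
      rw [show j + 1 + (k + 1) = j + k + 1 + 1 by omega]
      linear_combination qbinom_succ_succ (j + k + 1) j + h1 + X ^ (j + 1) * h2 - h3

theorem qbinom_symm {n k : ℕ} (hk : k ≤ n) : qbinom n (n - k) = qbinom n k := by
  obtain ⟨j, rfl⟩ := Nat.exists_eq_add_of_le' hk
  rw [Nat.add_sub_cancel, qbinom_symm_add]

theorem Finset.sum_powersetCard_succ_insert {α β : Type*} [DecidableEq α] [AddCommMonoid β]
    {a : α} {s : Finset α} (ha : a ∉ s) (k : ℕ) (f : Finset α → β) :
    ∑ t ∈ (insert a s).powersetCard (k + 1), f t =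
      ∑ t ∈ s.powersetCard (k + 1), f t + ∑ t ∈ s.powersetCard k, f (insert a t) := by
  have notMem {t} (ht : t ∈ s.powersetCard k) : a ∉ t := fun h => ha ((mem_powersetCard.1 ht).1 h)
  rw [powersetCard_succ_insert ha, sum_union, sum_image]
  · intro t ht u hu htu
    rw [← erase_insert (notMem ht), ← erase_insert (notMem hu)]
    exact congrArg (·.erase a) htu
  · refine disjoint_right.2 fun t ht ht' => ?_
    obtain ⟨u, -, rfl⟩ := mem_image.1 ht
    exact ha ((mem_powersetCard.1 ht').1 (mem_insert_self a u))

section Maj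

variable {E : Finset ℕ} {n : ℕ}

theorem DesE_insert_succ (hE : ∀ i ∈ E, i ≤ n) :
    DesE (insert (n + 1) E) = insert (n + 1) ((DesE E).erase n) := by
  ext i
  simp only [DesE, mem_filter, mem_insert, mem_erase]
  constructor
  · rintro ⟨rfl | hi, hi1⟩
    · exact Or.inl rfl
    · exact Or.inr ⟨fun h => hi1 (Or.inl (by omega)), hi, fun h => hi1 (Or.inr h)⟩
  · rintro (rfl | ⟨hin, hi, hi1⟩)
    · exact ⟨Or.inl rfl, by rintro (h | h) <;> [omega; exact absurd (hE _ h) (by omega)]⟩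
    · exact ⟨Or.inr hi, by rintro (h | h) <;> [omega; exact hi1 h]⟩

theorem majE_insert_succ_of_notMem (hE : ∀ i ∈ E, i ≤ n) (hn : n ∉ E) :
    majE (insert (n + 1) E) = majE E + (n + 1) := by
  have hnDes : n ∉ DesE E := fun h => hn (filter_subset _ _ h)
  have hDes : n + 1 ∉ DesE E := fun h => by have := hE _ (filter_subset _ _ h); omega
  rw [majE, DesE_insert_succ hE, erase_eq_of_notMem hnDes, sum_insert hDes, majE, add_comm]

theorem majE_insert_succ_of_mem (hE : ∀ i ∈ E, i ≤ n) (hn : n ∈ E) :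
    majE (insert (n + 1) E) = majE E + 1 := by
  have hnDes : n ∈ DesE E := mem_filter.2 ⟨hn, fun h => by have := hE _ h; omega⟩
  have hDes : n + 1 ∉ (DesE E).erase n := fun h => by
    have := hE _ (filter_subset _ _ (mem_of_mem_erase h)); omega
  rw [majE, DesE_insert_succ hE, sum_insert hDes, majE, ← add_sum_erase _ _ hnDes]
  ring

end Maj

theorem le_of_mem_powersetCard_Icc {n k : ℕ} {E : Finset ℕ}
    (hE : E ∈ (Icc 1 n).powersetCard k) : ∀ i ∈ E, i ≤ n :=
  fun _ hi => (mem_Icc.1 ((mem_powersetCard.1 hE).1 hi)).2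

theorem sum_powersetCard_Icc_succ_succ {M : Type*} [AddCommMonoid M] (n k : ℕ)
    (f : Finset ℕ → M) :
    ∑ E ∈ (Icc 1 (n + 1)).powersetCard (k + 1), f E =
      ∑ E ∈ (Icc 1 n).powersetCard (k + 1), f E +
        ∑ E ∈ (Icc 1 n).powersetCard k, f (insert (n + 1) E) := by
  rw [← insert_Icc_right_eq_Icc_add_one (by omega), sum_powersetCard_succ_insert (by simp)]

noncomputable def majSum (n k : ℕ) : ℤ[X] :=
  ∑ E ∈ (Icc 1 n).powersetCard k, X ^ majE E

noncomputable def majSumInsert (n k : ℕ) : ℤ[X] :=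
  ∑ E ∈ (Icc 1 n).powersetCard k, X ^ majE (insert (n + 1) E)

section MajSum

variable (n k : ℕ)

theorem majSum_zero_right : majSum n 0 = 1 := by
  simp [majSum, majE, DesE]

theorem majSumInsert_zero_right : majSumInsert n 0 = X ^ (n + 1) := by
  rw [majSumInsert, powersetCard_zero, sum_singleton,
    majE_insert_succ_of_notMem (by simp) (notMem_empty n), majE, DesE, filter_empty, sum_empty,
    zero_add]

theorem majSum_zero_succ : majSum 0 (k + 1) = 0 := by
  rw [majSum, powersetCard_eq_empty.2 (by simp), sum_empty]

theorem majSumInsert_zero_succ : majSumInsert 0 (k + 1) = 0 := by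
  rw [majSumInsert, powersetCard_eq_empty.2 (by simp), sum_empty]

theorem majSum_succ_succ : majSum (n + 1) (k + 1) = majSum n (k + 1) + majSumInsert n k :=
  sum_powersetCard_Icc_succ_succ n k _

theorem majSumInsert_succ_succ :
    majSumInsert (n + 1) (k + 1) = X ^ (n + 2) * majSum n (k + 1) + X * majSumInsert n k := by
  rw [majSumInsert, sum_powersetCard_Icc_succ_succ, majSum, majSumInsert, mul_sum, mul_sum]
  congr 1 <;> refine sum_congr rfl fun E hE => ?_
  · have hE' := le_of_mem_powersetCard_Icc hE
    rw [majE_insert_succ_of_notMem (n := n + 1) (fun i hi => (hE' i hi).trans n.le_succ)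
      fun h => by have := hE' _ h; omega]
    ring
  · have hE' := le_of_mem_powersetCard_Icc hE
    rw [majE_insert_succ_of_mem _ (mem_insert_self _ _)]
    · ring
    · simpa using fun i hi => (hE' i hi).trans n.le_succ

end MajSum

theorem majSum_eq_and_majSumInsert_eq (n : ℕ) :
    (∀ k, majSum n k = X ^ k * qbinom n k) ∧
      ∀ k, majSumInsert n k = X ^ (n + 1) * qbinom n k := by
  induction n with
  | zero =>
    refine ⟨fun k => ?_, fun k => ?_⟩ <;> cases k <;>
      simp [majSum_zero_right, majSumInsert_zero_right, majSum_zero_succ, majSumInsert_zero_succ,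
        qbinom_zero_right, qbinom_zero_succ]
  | succ n ih =>
    obtain ⟨hS, hT⟩ := ih
    refine ⟨fun k => ?_, fun k => ?_⟩ <;> cases k
    · rw [majSum_zero_right, qbinom_zero_right, pow_zero, mul_one]
    · rw [majSum_succ_succ, hS, hT, X_pow_mul_qbinom_succ_succ, add_comm]
    · rw [majSumInsert_zero_right, qbinom_zero_right, mul_one]
    · rw [majSumInsert_succ_succ, hS, hT, qbinom_succ_succ]
      ring

/-- `∑_{E ⊆ [n]} q^{maj(E)} = ∑_{h=0}^{n} q^{n-h} [n choose h]_q`. -/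
theorem majE_generating_polynomial (n : ℕ) :
    ∑ E ∈ (Finset.Icc 1 n).powerset, (Polynomial.X : Polynomial ℤ) ^ majE E =
      ∑ h ∈ Finset.range (n + 1), Polynomial.X ^ (n - h) * qbinom n h := by
  rw [sum_powerset, Nat.card_Icc, Nat.add_sub_cancel, ← sum_range_reflect]
  refine sum_congr rfl fun k hk => ?_
  have hkn : k ≤ n := Nat.lt_succ_iff.1 (mem_range.1 hk)
  rw [← majSum, (majSum_eq_and_majSumInsert_eq n).1, Nat.add_sub_cancel, qbinom_symm hkn]
end

section
/- The set of 321-avoiding centrosymmetric involutions of S_{2n+1} is in bijection with the set of 321-avoiding involutions of S_n, via the map sending α ∈ I_n(321) to the permutation π = α (n+1) α' of S_{2n+1}, where α'(i) = 2n+2 - α(2n+2-i) for n+2 ≤ i ≤ 2n+1. Moreover under this bijection des^+(π) = des(α) and maj^+(π) = maj(α). -/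
open Finset Polynomial
open scoped Classical

/-- 1-based value of a permutation of `Fin m`: `pval π i = π(i)` for `1 ≤ i ≤ m`. -/
def pval {m : ℕ} (π : Equiv.Perm (Fin m)) (i : ℕ) : ℕ :=
  if h : i - 1 < m then (π ⟨i - 1, h⟩ : ℕ) + 1 else 0

/-- `π` is centrosymmetric: `π(i) + π(m+1-i) = m+1` for all `1 ≤ i ≤ m`. -/
def Centro {m : ℕ} (π : Equiv.Perm (Fin m)) : Prop :=
  ∀ i ∈ Finset.Icc 1 m, pval π i + pval π (m + 1 - i) = m + 1

/-- `π` avoids the pattern 321: no decreasing subsequence of length 3. -/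
def Avoids321 {m : ℕ} (π : Equiv.Perm (Fin m)) : Prop :=
  ¬ ∃ i j k : Fin m, i < j ∧ j < k ∧ π k < π j ∧ π j < π i

/-- The descent set of `π`: positions `1 ≤ i < m` with `π(i) > π(i+1)`. -/
def DesSet {m : ℕ} (π : Equiv.Perm (Fin m)) : Finset ℕ :=
  (Finset.Ico 1 m).filter (fun i => pval π (i + 1) < pval π i)

/-- The number of descents of `π`. -/
def desNum {m : ℕ} (π : Equiv.Perm (Fin m)) : ℕ := (DesSet π).card

/-- The major index of `π`: the sum of the descent positions. -/
def majStat {m : ℕ} (π : Equiv.Perm (Fin m)) : ℕ := ∑ i ∈ DesSet π, i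

/-- The set `I_n(321)` of 321-avoiding involutions of `S_n`. -/
noncomputable def Iset (n : ℕ) : Finset (Equiv.Perm (Fin n)) :=
  Finset.univ.filter (fun α => Function.Involutive α ∧ Avoids321 α)

/-- The set `I^C_{2n+1}(321)` of 321-avoiding centrosymmetric involutions of `S_{2n+1}`. -/
noncomputable def ICodd (n : ℕ) : Finset (Equiv.Perm (Fin (2 * n + 1))) :=
  Finset.univ.filter (fun π => Function.Involutive π ∧ Centro π ∧ Avoids321 π)

/-!
A centrosymmetric permutation `π` of `[2n+1]` commutes with the reflection `i ↦ 2n+2-i`, so it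
fixes `n+1`; if it also avoids 321 it maps `[1,n]` into itself, because `π(i) > n+1` with
`i ≤ n` would make `π(i), n+1, π(2n+2-i)` a 321 pattern. So `π` is determined by its restriction
`α` to `[1,n]`. Conversely, `α` extended by its reflection is centrosymmetric, and it avoids 321
whenever `α` does, since a decreasing pair never straddles two of the blocks `[1,n]`, `{n+1}`,
`[n+2,2n+1]`. The extension agrees with `α` on `[1,n]` and has no descent at `n`, which gives
`des⁺ π = des α` and `maj⁺ π = maj α`.
-/

open Equiv

section Perm

variable {m n : ℕ}

theorem pval_succ (π : Perm (Fin m)) (i : Fin m) : pval π (i + 1) = π i + 1 := by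
  simp [pval]

theorem pval_le (π : Perm (Fin m)) (j : ℕ) : pval π j ≤ m := by
  unfold pval
  split
  · exact (π _).isLt
  · omega

theorem centro_iff_apply_rev (π : Perm (Fin m)) : Centro π ↔ ∀ i, π i.rev = (π i).rev := by
  have hrev : ∀ i : Fin m, m + 1 - (i + 1) = i.rev + 1 := fun i => by
    simp only [Fin.val_rev]
    omega
  constructor
  · intro h i
    have := h (i + 1) (by simp)
    rw [hrev, pval_succ, pval_succ] at this
    ext
    simp only [Fin.val_rev]
    omega
  · intro h j hj
    obtain ⟨i, rfl⟩ : ∃ i : Fin m, j = i + 1 :=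
      ⟨⟨j - 1, by simp at hj; omega⟩, by simp at hj ⊢; omega⟩
    rw [hrev, pval_succ, pval_succ, h, Fin.val_rev]
    omega

theorem Centro.apply_rev {π : Perm (Fin m)} (hc : Centro π) (i : Fin m) :
    π i.rev = (π i).rev :=
  (centro_iff_apply_rev π).1 hc i

variable {π : Perm (Fin m)} {α : Perm (Fin n)}

theorem pval_eq_of_castLE (hnm : n ≤ m) (h : ∀ i : Fin n, π (i.castLE hnm) = (α i).castLE hnm)
    {j : ℕ} (hj1 : 1 ≤ j) (hjn : j ≤ n) : pval π j = pval α j := by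
  obtain ⟨i, rfl⟩ : ∃ i : Fin n, (i : ℕ) + 1 = j := ⟨⟨j - 1, by omega⟩, by simp; omega⟩
  rw [← Fin.val_castLE hnm i, pval_succ, h, Fin.val_castLE, Fin.val_castLE, pval_succ]

theorem desSet_filter_le_of_castLE (hnm : n < m)
    (h : ∀ i : Fin n, π (i.castLE hnm.le) = (α i).castLE hnm.le)
    (hn : pval α n ≤ pval π (n + 1)) : (DesSet π).filter (· ≤ n) = DesSet α := by
  ext i
  simp only [DesSet, mem_filter, mem_Ico]
  constructor
  · rintro ⟨⟨⟨hi1, -⟩, hdes⟩, hin⟩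
    have hin' : i < n := lt_of_le_of_ne hin <| by
      rintro rfl
      rw [pval_eq_of_castLE hnm.le h hi1 le_rfl] at hdes
      omega
    rw [pval_eq_of_castLE hnm.le h hi1 hin'.le,
      pval_eq_of_castLE hnm.le h (by omega) hin'] at hdes
    exact ⟨⟨hi1, hin'⟩, hdes⟩
  · rintro ⟨⟨hi1, hin⟩, hdes⟩
    rw [← pval_eq_of_castLE hnm.le h hi1 hin.le,
      ← pval_eq_of_castLE hnm.le h (by omega) hin] at hdes
    exact ⟨⟨⟨hi1, by omega⟩, hdes⟩, hin.le⟩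

end Perm

section Restrict

variable {m n : ℕ} (π : Perm (Fin m)) (hnm : n ≤ m)
  (hlow : ∀ i : Fin m, (i : ℕ) < n → (π i : ℕ) < n)

def restrictFun (i : Fin n) : Fin n :=
  ⟨π (i.castLE hnm), hlow _ i.isLt⟩

theorem restrictFun_injective : Function.Injective (restrictFun π hnm hlow) := fun i j h =>
  Fin.castLE_injective hnm <| π.injective <| Fin.ext <| by
    simpa only [restrictFun, Fin.mk.injEq] using h

noncomputable def restrictPerm : Perm (Fin n) :=
  Equiv.ofBijective _ (Finite.injective_iff_bijective.1 (restrictFun_injective π hnm hlow))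

theorem castLE_restrictPerm (i : Fin n) :
    (restrictPerm π hnm hlow i).castLE hnm = π (i.castLE hnm) := rfl

variable {π}

theorem restrictPerm_involutive (hI : Function.Involutive π) :
    Function.Involutive (restrictPerm π hnm hlow) := fun i =>
  Fin.castLE_injective hnm (by rw [castLE_restrictPerm, castLE_restrictPerm, hI])

theorem Avoids321.restrictPerm (ha : Avoids321 π) : Avoids321 (restrictPerm π hnm hlow) := by
  rintro ⟨i, j, k, hij, hjk, hkj, hji⟩
  refine ha ⟨i.castLE hnm, j.castLE hnm, k.castLE hnm, hij, hjk, ?_, ?_⟩ <;>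
    simpa only [← castLE_restrictPerm π hnm hlow, Fin.castLE_lt_castLE_iff]

end Restrict

section Odd

variable {n : ℕ}

/-- The middle point; as a position in `pval` it is `n + 1`. -/
def Fin.mid (n : ℕ) : Fin (2 * n + 1) := ⟨n, by omega⟩

@[simp]
theorem Fin.val_mid : (Fin.mid n : ℕ) = n := rfl

theorem Fin.rev_mid : (Fin.mid n).rev = Fin.mid n := by
  ext
  rw [Fin.val_rev, Fin.val_mid]
  omega

theorem Fin.eq_mid_of_rev_eq {i : Fin (2 * n + 1)} (h : i.rev = i) : i = Fin.mid n := by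
  rw [Fin.ext_iff, Fin.val_rev] at h
  ext
  rw [Fin.val_mid]
  omega

theorem Fin.castLE_or_mid_or_rev_castLE (i : Fin (2 * n + 1)) :
    (∃ j : Fin n, i = j.castLE (by omega)) ∨ i = Fin.mid n ∨
      ∃ j : Fin n, i = (j.castLE (by omega)).rev := by
  rcases (show (i : ℕ) < n ∨ (i : ℕ) = n ∨ n < i by omega) with hi | hi | hi
  · exact Or.inl ⟨⟨i, hi⟩, rfl⟩
  · exact Or.inr (Or.inl (Fin.ext hi))
  · refine Or.inr (Or.inr ⟨⟨i.rev, by rw [Fin.val_rev]; omega⟩, ?_⟩)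
    ext
    simp only [Fin.val_rev, Fin.val_castLE]
    omega

variable {π σ : Perm (Fin (2 * n + 1))}

theorem Centro.apply_mid (hc : Centro π) : π (Fin.mid n) = Fin.mid n := by
  apply Fin.eq_mid_of_rev_eq
  rw [← hc.apply_rev, Fin.rev_mid]

theorem Centro.ext_of_lt (hπ : Centro π) (hσ : Centro σ)
    (h : ∀ i : Fin (2 * n + 1), (i : ℕ) < n → π i = σ i) : π = σ := by
  ext1 i
  rcases i.castLE_or_mid_or_rev_castLE with ⟨j, rfl⟩ | rfl | ⟨j, rfl⟩
  · exact h _ j.isLt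
  · rw [hπ.apply_mid, hσ.apply_mid]
  · rw [hπ.apply_rev, hσ.apply_rev, h _ j.isLt]

theorem Centro.apply_lt_of_avoids321 (hc : Centro π) (ha : Avoids321 π) {i : Fin (2 * n + 1)}
    (hi : (i : ℕ) < n) : (π i : ℕ) < n := by
  by_contra hge
  have hne : π i ≠ Fin.mid n := by
    rw [← hc.apply_mid]
    exact fun h => absurd (congrArg Fin.val (π.injective h)) (by rw [Fin.val_mid]; omega)
  have hgt : n < (π i : ℕ) := by
    have : (π i : ℕ) ≠ n := fun h => hne (Fin.ext h)
    omega
  refine ha ⟨i, Fin.mid n, i.rev, ?_, ?_, ?_, ?_⟩ <;>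
    simp only [Fin.lt_def, hc.apply_rev, hc.apply_mid, Fin.val_rev, Fin.val_mid] <;> omega

theorem Centro.apply_lt_iff (hc : Centro π)
    (hlow : ∀ i : Fin (2 * n + 1), (i : ℕ) < n → (π i : ℕ) < n) (i : Fin (2 * n + 1)) :
    (π i : ℕ) < n ↔ (i : ℕ) < n := by
  refine ⟨fun h => ?_, hlow i⟩
  by_contra hi
  rcases (show (i : ℕ) = n ∨ n < i by omega) with hmid | hup
  · rw [show i = Fin.mid n from Fin.ext hmid, hc.apply_mid] at h
    exact lt_irrefl n h
  · have := hlow i.rev (by simp only [Fin.val_rev]; omega)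
    rw [hc.apply_rev, Fin.val_rev] at this
    omega

/-- A 321 pattern of `π` lies in one of the two outer blocks, since `π` preserves the three
blocks; reflecting it by `Fin.rev` if necessary gives one in the first block, i.e. in `α`. -/
theorem Centro.avoids321 (hc : Centro π) {α : Perm (Fin n)}
    (hα : ∀ i : Fin n, π (i.castLE (by omega)) = (α i).castLE (by omega)) (ha : Avoids321 α) :
    Avoids321 π := by
  have hn : n ≤ 2 * n + 1 := by omega
  have hlt := hc.apply_lt_iff fun i hi => (congrArg Fin.val (hα ⟨i, hi⟩)).trans_lt (α _).isLt
  have lower : ∀ i j k : Fin (2 * n + 1), i < j → j < k → (k : ℕ) < n →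
      π k < π j → π j < π i → False := by
    intro i j k hij hjk hk hkj hji
    obtain ⟨i', rfl⟩ : ∃ i' : Fin n, i'.castLE hn = i := ⟨⟨i, by omega⟩, rfl⟩
    obtain ⟨j', rfl⟩ : ∃ j' : Fin n, j'.castLE hn = j := ⟨⟨j, by omega⟩, rfl⟩
    obtain ⟨k', rfl⟩ : ∃ k' : Fin n, k'.castLE hn = k := ⟨⟨k, hk⟩, rfl⟩
    simp only [hα, Fin.castLE_lt_castLE_iff] at hij hjk hkj hji
    exact ha ⟨i', j', k', hij, hjk, hkj, hji⟩
  rintro ⟨i, j, k, hij, hjk, hkj, hji⟩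
  rw [Fin.lt_def] at hij hjk hkj hji
  rcases (show (j : ℕ) < n ∨ (j : ℕ) = n ∨ n < j by omega) with hj | hj | hj
  · exact lower i j k hij hjk ((hlt k).1 (by have := (hlt j).2 hj; omega)) hkj hji
  · rw [show j = Fin.mid n from Fin.ext hj, hc.apply_mid, Fin.val_mid] at hji
    have := (hlt i).2 (by omega)
    omega
  · have hπj := (hlt j).not.2 (by omega)
    have hi : n < (i : ℕ) := by
      rcases (show (i : ℕ) < n ∨ (i : ℕ) = n ∨ n < i by omega) with hi | hi | hi
      · have := (hlt i).2 hi
        omega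
      · rw [show i = Fin.mid n from Fin.ext hi, hc.apply_mid, Fin.val_mid] at hji
        omega
      · exact hi
    refine lower k.rev j.rev i.rev ?_ ?_ ?_ ?_ ?_ <;>
      simp only [Fin.lt_def, hc.apply_rev, Fin.val_rev] <;> omega

end Odd

section DoubleFun

variable {n : ℕ}

def doubleFun (α : Fin n → Fin n) (i : Fin (2 * n + 1)) : Fin (2 * n + 1) :=
  if h : (i : ℕ) < n then (α ⟨i, h⟩).castLE (by omega)
  else if h' : (i.rev : ℕ) < n then ((α ⟨i.rev, h'⟩).castLE (by omega)).rev
  else i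

variable (α : Fin n → Fin n)

@[simp]
theorem doubleFun_castLE (i : Fin n) :
    doubleFun α (i.castLE (by omega)) = (α i).castLE (by omega) := by
  simp [doubleFun]

@[simp]
theorem doubleFun_mid : doubleFun α (Fin.mid n) = Fin.mid n := by
  rw [doubleFun, dif_neg (by simp), dif_neg (by simp [Fin.rev_mid])]

@[simp]
theorem doubleFun_rev_castLE (i : Fin n) :
    doubleFun α (i.castLE (by omega)).rev = ((α i).castLE (by omega)).rev := by
  rw [doubleFun, dif_neg (by simp only [Fin.val_rev, Fin.val_castLE]; omega),
    dif_pos (by simp)]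
  simp

theorem doubleFun_rev (i : Fin (2 * n + 1)) : doubleFun α i.rev = (doubleFun α i).rev := by
  rcases i.castLE_or_mid_or_rev_castLE with ⟨j, rfl⟩ | rfl | ⟨j, rfl⟩ <;>
    simp [Fin.rev_mid]

theorem doubleFun_comp (β : Fin n → Fin n) :
    doubleFun (α ∘ β) = doubleFun α ∘ doubleFun β := by
  funext i
  rcases i.castLE_or_mid_or_rev_castLE with ⟨j, rfl⟩ | rfl | ⟨j, rfl⟩ <;> simp

theorem doubleFun_id : doubleFun (id : Fin n → Fin n) = id := by
  funext i
  rcases i.castLE_or_mid_or_rev_castLE with ⟨j, rfl⟩ | rfl | ⟨j, rfl⟩ <;> simp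

end DoubleFun

/-- The permutation `π = α (n+1) α'` of the statement. -/
def double {n : ℕ} (α : Perm (Fin n)) : Perm (Fin (2 * n + 1)) where
  toFun := doubleFun α
  invFun := doubleFun α.symm
  left_inv i := by
    rw [← Function.comp_apply (f := doubleFun α.symm), ← doubleFun_comp, α.symm_comp_self,
      doubleFun_id, id_eq]
  right_inv i := by
    rw [← Function.comp_apply (f := doubleFun α), ← doubleFun_comp, α.self_comp_symm,
      doubleFun_id, id_eq]

section Double

variable {n : ℕ} (α : Perm (Fin n))

@[simp]
theorem double_apply_castLE (i : Fin n) :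
    double α (i.castLE (by omega)) = (α i).castLE (by omega) :=
  doubleFun_castLE α i

theorem centro_double : Centro (double α) :=
  (centro_iff_apply_rev _).2 (doubleFun_rev α)

variable {α}

theorem involutive_double (hα : Function.Involutive α) : Function.Involutive (double α) :=
  fun i => by
    change doubleFun α (doubleFun α i) = i
    rw [← Function.comp_apply (f := doubleFun α), ← doubleFun_comp, hα.comp_self, doubleFun_id,
      id_eq]

theorem avoids321_double (ha : Avoids321 α) : Avoids321 (double α) :=
  (centro_double α).avoids321 (double_apply_castLE α) ha

variable (α)

theorem pval_double_of_le {j : ℕ} (hj1 : 1 ≤ j) (hjn : j ≤ n) : pval (double α) j = pval α j :=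
  pval_eq_of_castLE (by omega) (double_apply_castLE α) hj1 hjn

theorem pval_double_mid : pval (double α) (n + 1) = n + 1 := by
  rw [show n + 1 = (Fin.mid n : ℕ) + 1 from rfl, pval_succ, (centro_double α).apply_mid]

theorem pval_double_of_gt {j : ℕ} (hj1 : n + 2 ≤ j) (hjn : j ≤ 2 * n + 1) :
    pval (double α) j = 2 * n + 2 - pval α (2 * n + 2 - j) := by
  have hc := centro_double α j (mem_Icc.2 ⟨by omega, hjn⟩)
  rw [show 2 * n + 1 + 1 - j = 2 * n + 2 - j by omega,
    pval_double_of_le α (j := 2 * n + 2 - j) (by omega) (by omega)] at hc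
  omega

theorem filter_desSet_double : (DesSet (double α)).filter (· ≤ n) = DesSet α :=
  desSet_filter_le_of_castLE (by omega) (double_apply_castLE α) <| by
    rw [pval_double_mid]
    exact Nat.le_succ_of_le (pval_le α n)

theorem restrictPerm_double (hlow : ∀ i : Fin (2 * n + 1), (i : ℕ) < n → (double α i : ℕ) < n) :
    restrictPerm (double α) (by omega) hlow = α := by
  ext1 i
  exact Fin.castLE_injective (by omega : n ≤ 2 * n + 1)
    (by rw [castLE_restrictPerm, double_apply_castLE])

theorem double_restrictPerm {π : Perm (Fin (2 * n + 1))} (hc : Centro π)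
    (hlow : ∀ i : Fin (2 * n + 1), (i : ℕ) < n → (π i : ℕ) < n) :
    double (restrictPerm π (by omega) hlow) = π := by
  have hn : n ≤ 2 * n + 1 := by omega
  refine (centro_double _).ext_of_lt hc fun i hi => ?_
  obtain ⟨i, rfl⟩ : ∃ i' : Fin n, i'.castLE hn = i := ⟨⟨i, hi⟩, rfl⟩
  rw [double_apply_castLE, castLE_restrictPerm]

end Double

section Bijection

variable {n : ℕ}

theorem mem_Iset {α : Perm (Fin n)} : α ∈ Iset n ↔ Function.Involutive α ∧ Avoids321 α := by
  simp [Iset]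

theorem mem_ICodd {π : Perm (Fin (2 * n + 1))} :
    π ∈ ICodd n ↔ Function.Involutive π ∧ Centro π ∧ Avoids321 π := by
  simp [ICodd]

theorem lt_of_mem_ICodd {π : Perm (Fin (2 * n + 1))} (hπ : π ∈ ICodd n) (i : Fin (2 * n + 1))
    (hi : (i : ℕ) < n) : (π i : ℕ) < n :=
  (mem_ICodd.1 hπ).2.1.apply_lt_of_avoids321 (mem_ICodd.1 hπ).2.2 hi

noncomputable def oddCentroEquiv (n : ℕ) :
    {α : Perm (Fin n) // α ∈ Iset n} ≃ {π : Perm (Fin (2 * n + 1)) // π ∈ ICodd n} where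
  toFun α :=
    ⟨double α.1, mem_ICodd.2 ⟨involutive_double (mem_Iset.1 α.2).1, centro_double α.1,
      avoids321_double (mem_Iset.1 α.2).2⟩⟩
  invFun π :=
    ⟨restrictPerm π.1 (by omega) (lt_of_mem_ICodd π.2),
      mem_Iset.2 ⟨restrictPerm_involutive _ _ (mem_ICodd.1 π.2).1,
        (mem_ICodd.1 π.2).2.2.restrictPerm _ _⟩⟩
  left_inv α := Subtype.ext (restrictPerm_double α.1 _)
  right_inv π := Subtype.ext (double_restrictPerm (mem_ICodd.1 π.2).2.1 _)

@[simp]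
theorem oddCentroEquiv_apply_coe (α : {α : Perm (Fin n) // α ∈ Iset n}) :
    (oddCentroEquiv n α : Perm (Fin (2 * n + 1))) = double α.1 := rfl

end Bijection

/-- `I^C_{2n+1}(321)` is in bijection with `I_n(321)` via `α ↦ π = α (n+1) α'`, where
`α'(i) = 2n+2 - α(2n+2-i)` for `n+2 ≤ i ≤ 2n+1`; moreover `des^+(π) = des(α)` and
`maj^+(π) = maj(α)`. -/
theorem odd_centro_bijection (n : ℕ) :
    ∃ Φ : {α : Equiv.Perm (Fin n) // α ∈ Iset n} ≃
        {π : Equiv.Perm (Fin (2 * n + 1)) // π ∈ ICodd n},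
      ∀ α : {α : Equiv.Perm (Fin n) // α ∈ Iset n},
        (∀ i ∈ Finset.Icc 1 n, pval (Φ α).1 i = pval α.1 i) ∧
        pval (Φ α).1 (n + 1) = n + 1 ∧
        (∀ i ∈ Finset.Icc (n + 2) (2 * n + 1),
          pval (Φ α).1 i = 2 * n + 2 - pval α.1 (2 * n + 2 - i)) ∧
        ((DesSet (Φ α).1).filter (· ≤ n)).card = desNum α.1 ∧
        (∑ i ∈ (DesSet (Φ α).1).filter (· ≤ n), i) = majStat α.1 := by
  refine ⟨oddCentroEquiv n, fun α => ?_⟩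
  simp only [oddCentroEquiv_apply_coe, filter_desSet_double, mem_Icc]
  exact ⟨fun j hj => pval_double_of_le α.1 hj.1 hj.2, pval_double_mid α.1,
    fun j hj => pval_double_of_gt α.1 hj.1 hj.2, rfl, rfl⟩
end

section
/- For every 321-avoiding involution π of S_n, the length of the longest increasing subsequence of π equals the number of excedances of π plus the number of fixed points of π, and equivalently equals (n + fp(π))/2, where fp(π) is the number of fixed points of π. -/
open Finset Polynomial
open scoped Classical

/-- The length of a longest increasing subsequence of `π`. -/
noncomputable def lisLen {n : ℕ} (π : Equiv.Perm (Fin n)) : ℕ :=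
  (Finset.univ.powerset.filter
    (fun s : Finset (Fin n) => ∀ i ∈ s, ∀ j ∈ s, i < j → π i < π j)).sup Finset.card

/-- The number of excedances of `π`. -/
def excNum {n : ℕ} (π : Equiv.Perm (Fin n)) : ℕ :=
  (Finset.univ.filter (fun i : Fin n => i < π i)).card

/-- The number of fixed points of `π`. -/
def fpNum {n : ℕ} (π : Equiv.Perm (Fin n)) : ℕ :=
  (Finset.univ.filter (fun i : Fin n => π i = i)).card

/-! The positions `i` with `π i ≤ i` (fixed points and the larger point of each `2`-cycle)
carry an increasing subsequence when `π` avoids `321`, and no increasing subsequence is longer,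
since mapping each point to the larger point of its orbit is injective on any increasing
subsequence of an involution. The `2`-cycles pair excedances with deficiencies, so this set has
`exc(π) + fp(π)` elements and its complement, the excedances, has `exc(π)`, whence
`n = 2 exc(π) + fp(π)`. -/

section Involution

variable {α : Type*} [LinearOrder α] [Fintype α] {σ : Equiv.Perm α}

theorem card_filter_apply_lt_eq_card_filter_lt_apply (hσ : Function.Involutive σ) :
    #{i | σ i < i} = #{i | i < σ i} :=
  card_bij (fun i _ => σ i) (by simp [hσ _]) (fun _ _ _ _ h => σ.injective h)
    (fun j hj => ⟨σ j, by simpa [hσ j] using hj, hσ j⟩)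

theorem card_filter_apply_le_eq_add (hσ : Function.Involutive σ) :
    #{i | σ i ≤ i} = #{i | i < σ i} + #{i | σ i = i} := by
  rw [← card_filter_apply_lt_eq_card_filter_lt_apply hσ, ← card_union_of_disjoint]
  · congr 1; ext i; simp [le_iff_lt_or_eq]
  · exact disjoint_filter.2 fun i _ h => h.ne

theorem card_le_card_filter_apply_le_of_strictMonoOn (hσ : Function.Involutive σ)
    {s : Finset α} (hs : StrictMonoOn σ s) : #s ≤ #{i | σ i ≤ i} := by
  refine card_le_card_of_injOn (fun i => max i (σ i)) (fun i _ => ?_)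
    fun a ha b hb (hab : max a (σ a) = max b (σ b)) => ?_
  · rcases le_total (σ i) i with h | h
    · simpa [max_eq_left h] using h
    · simp [hσ i, h]
  · have hb_orbit : b = a ∨ b = σ a := by
      rcases max_choice a (σ a) with h₁ | h₁ <;> rcases max_choice b (σ b) with h₂ | h₂ <;>
        rw [h₁, h₂] at hab
      · exact .inl hab.symm
      · exact .inr (by rw [hab, hσ b])
      · exact .inr hab.symm
      · exact .inl (σ.injective hab).symm
    rcases hb_orbit with rfl | rfl
    · rfl
    rcases lt_trichotomy a (σ a) with h | h | h
    · exact absurd (hs ha hb h) (by rw [hσ a]; exact h.not_gt)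
    · exact h
    · exact absurd (hs hb ha h) (by rw [hσ a]; exact h.not_gt)

end Involution

/-- A descent `π j < π i` with `π i ≤ i < j` would make `π j, i, j` an occurrence of `321`. -/
theorem strictMonoOn_filter_apply_le {n : ℕ} {π : Equiv.Perm (Fin n)}
    (hinv : Function.Involutive π) (hav : Avoids321 π) :
    StrictMonoOn π ({i | π i ≤ i} : Finset (Fin n)) := by
  intro i hi j _ hij
  simp only [coe_filter, mem_univ, true_and, Set.mem_ofPred_eq] at hi
  refine lt_of_le_of_ne (not_lt.1 fun hji => hav ?_) (π.injective.ne hij.ne)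
  exact ⟨π j, i, j, hji.trans_le hi, hij, hji, by rw [hinv j]; exact hi.trans_lt hij⟩

theorem lisLen_eq_card {n : ℕ} (π : Equiv.Perm (Fin n)) {s : Finset (Fin n)}
    (hs : StrictMonoOn π s) (hmax : ∀ t : Finset (Fin n), StrictMonoOn π t → #t ≤ #s) :
    lisLen π = #s :=
  le_antisymm (Finset.sup_le fun t ht => hmax t (mem_filter.1 ht).2)
    (Finset.le_sup (f := Finset.card) (mem_filter.2 ⟨mem_powerset.2 (subset_univ s), hs⟩))

/-- For a 321-avoiding involution `π ∈ S_n`, the length of a longest increasing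
subsequence equals the number of excedances plus the number of fixed points,
equivalently `(n + fp(π))/2`. -/
theorem lis_of_avoiding_involution (n : ℕ) (π : Equiv.Perm (Fin n))
    (hinv : Function.Involutive π) (hav : Avoids321 π) :
    lisLen π = excNum π + fpNum π ∧ 2 * lisLen π = n + fpNum π := by
  have hlis : lisLen π = #{i | π i ≤ i} :=
    lisLen_eq_card π (strictMonoOn_filter_apply_le hinv hav)
      fun _ ht => card_le_card_filter_apply_le_of_strictMonoOn hinv ht
  have hsplit : #{i | π i ≤ i} = excNum π + fpNum π := card_filter_apply_le_eq_add hinv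
  have hn : excNum π + #{i | π i ≤ i} = n := by
    simpa [excNum] using card_filter_add_card_filter_not (s := univ) (p := fun i : Fin n => i < π i)
  omega
end
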